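/- arXiv:2311.07627 — 9 statements merged into one kernel-verified Lean document; each statement's English description precedes it below -/
import Mathlib

section
/- If the graph is connected and S is a nonempty strict subset of nodes, then the Dirichlet problem has at most one solution: if T and T' both satisfy (LT)_i = 0 for all i not in S (where L = D - A is the graph Laplacian) and T_i = T'_i for all i in S, then T = T'. -/
/-- Uniqueness of the solution to the Dirichlet problem on a connected graph. -/
theorem dirichlet_unique (n : ℕ) (A : Matrix (Fin n) (Fin n) ℝ)
    (hsym : A.IsSymm) (hnonneg : ∀ i j, 0 ≤ A i j)
    (hdeg : ∀ i, 0 < ∑ j, A i j)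
    (hconn : (SimpleGraph.fromRel (fun i j => A i j ≠ 0)).Connected)
    (S : Finset (Fin n)) (hS : S.Nonempty) (hS' : S ≠ Finset.univ)
    (T T' : Fin n → ℝ)
    (hT : ∀ i ∉ S, ((Matrix.diagonal (fun i => ∑ j, A i j) - A).mulVec T) i = 0)
    (hT' : ∀ i ∉ S, ((Matrix.diagonal (fun i => ∑ j, A i j) - A).mulVec T') i = 0)
    (hbd : ∀ i ∈ S, T i = T' i) :
    T = T' := by
  set u : Fin n → ℝ := fun i => T i - T' i with hu
  have huS : ∀ i ∈ S, u i = 0 := fun i hi => by simp [hu, hbd i hi]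
  have hLu : ∀ i ∉ S, (∑ j, A i j) * u i - ∑ j, A i j * u j = 0 := by
    intro i hi
    have h1 := hT i hi
    have h2 := hT' i hi
    rw [Matrix.sub_mulVec] at h1 h2
    simp only [Pi.sub_apply, Matrix.mulVec_diagonal] at h1 h2
    simp only [Matrix.mulVec, dotProduct] at h1 h2
    have hsplit : ∑ j, A i j * u j = (∑ j, A i j * T j) - ∑ j, A i j * T' j := by
      rw [← Finset.sum_sub_distrib]
      exact Finset.sum_congr rfl fun j _ => by simp [hu]; ring
    simp only [hu]
    rw [hsplit, mul_sub]
    linarith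
  -- energy is zero
  have hE : ∑ i, u i * ((∑ j, A i j) * u i - ∑ j, A i j * u j) = 0 := by
    apply Finset.sum_eq_zero
    intro i _
    by_cases hi : i ∈ S
    · rw [huS i hi]; ring
    · rw [hLu i hi]; ring
  have hswap : ∑ i, ∑ j, A i j * u j ^ 2 = ∑ i, ∑ j, A i j * u i ^ 2 := by
    rw [Finset.sum_comm]
    refine Finset.sum_congr rfl fun i _ => Finset.sum_congr rfl fun j _ => ?_
    rw [hsym.apply j i]
  have key : ∑ i, ∑ j, A i j * (u i - u j) ^ 2 = 0 := by
    have expand : ∑ i, ∑ j, A i j * (u i - u j) ^ 2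
        = (∑ i, ∑ j, A i j * u i ^ 2) + (∑ i, ∑ j, A i j * u j ^ 2)
          - 2 * ∑ i, ∑ j, A i j * (u i * u j) := by
      simp only [Finset.mul_sum, ← Finset.sum_sub_distrib, ← Finset.sum_add_distrib]
      exact Finset.sum_congr rfl fun i _ => Finset.sum_congr rfl fun j _ => by ring
    have hEexp : ∑ i, u i * ((∑ j, A i j) * u i - ∑ j, A i j * u j)
        = (∑ i, ∑ j, A i j * u i ^ 2) - ∑ i, ∑ j, A i j * (u i * u j) := by
      simp only [Finset.sum_mul, Finset.mul_sum, mul_sub, ← Finset.sum_sub_distrib]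
      exact Finset.sum_congr rfl fun i _ => Finset.sum_congr rfl fun j _ => by ring
    rw [expand, hswap]
    rw [hEexp] at hE
    linarith
  have hterm : ∀ i ∈ Finset.univ, ∀ j ∈ Finset.univ, A i j * (u i - u j) ^ 2 = 0 := by
    have h1 : ∀ i ∈ (Finset.univ : Finset (Fin n)), ∑ j, A i j * (u i - u j) ^ 2 = 0 := by
      rw [← Finset.sum_eq_zero_iff_of_nonneg]
      · exact key
      · intro i _
        exact Finset.sum_nonneg fun j _ => mul_nonneg (hnonneg i j) (sq_nonneg _)
    intro i hi j hj
    have := (Finset.sum_eq_zero_iff_of_nonneg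
      (fun j _ => mul_nonneg (hnonneg i j) (sq_nonneg (u i - u j)))).mp (h1 i hi)
    exact this j hj
  have hedge : ∀ i j, A i j ≠ 0 → u i = u j := by
    intro i j hA
    have := hterm i (Finset.mem_univ i) j (Finset.mem_univ j)
    have h2 : (u i - u j) ^ 2 = 0 := by
      rcases mul_eq_zero.mp this with h | h
      · exact absurd h hA
      · exact h
    have := pow_eq_zero_iff (n := 2) (by norm_num) |>.mp h2
    linarith [sub_eq_zero.mp this]
  -- along walks u is constant
  have hadj : ∀ i j, (SimpleGraph.fromRel (fun i j => A i j ≠ 0)).Adj i j → u i = u j := by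
    intro i j hij
    rcases hij.2 with h | h
    · exact hedge i j h
    · exact (hedge j i h).symm
  have hwalk : ∀ {a b : Fin n}, (SimpleGraph.fromRel (fun i j => A i j ≠ 0)).Walk a b →
      u a = u b := by
    intro a b w
    induction w with
    | nil => rfl
    | cons h p ih => exact (hadj _ _ h).trans ih
  obtain ⟨s, hs⟩ := hS
  have hzero : ∀ i, u i = 0 := by
    intro i
    obtain ⟨w⟩ := hconn i s
    rw [hwalk w, huS s hs]
  funext i
  have := hzero i
  simp only [hu] at this
  linarith
end

section
/- In the weighted block model with K blocks of sizes n_1,...,n_K, intra-block edge weight p, inter-block weight q, and s_k seeds in block k, if seeds in block 1 have temperature 1 and all other seeds temperature 0, the equilibrium temperature T_k of free nodes in block k satisfies (s_1(p-q) + nq) T_1 = s_1(p-q) + n·T̄·q and (s_k(p-q) + nq) T_k = n·T̄·q for k ≥ 2, where T̄ = (1/n)∑_i T_i is the mean temperature over all nodes. -/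
/-!
Completing the sum over `j ≠ k` in the balance equation of block `k` to a sum over all blocks makes
the other blocks enter only through the total free heat `∑ j, (n_j - s_j) T_j`, which equals
`n T̄ - s₁`; the `(n_k - s_k)` free nodes of block `k` then cancel against `n_k (p - q)`, leaving
`s_k (p - q)` on the left.
-/

open Finset

theorem balance_eq_add_total_heat {ι : Type*} [Fintype ι] [DecidableEq ι]
    (nv sv T : ι → ℝ) (p q N c : ℝ) (k : ι)
    (hbal : (nv k * (p - q) + N * q) * T k =
      c + (nv k - sv k) * p * T k + ∑ j ∈ univ.erase k, (nv j - sv j) * q * T j) :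
    (sv k * (p - q) + N * q) * T k = c + q * ∑ j, (nv j - sv j) * T j := by
  have hsum : ∑ j ∈ univ.erase k, (nv j - sv j) * q * T j =
      q * ∑ j, (nv j - sv j) * T j - q * ((nv k - sv k) * T k) := by
    rw [sum_erase_eq_sub (mem_univ k), mul_sum]
    congr 1
    · exact sum_congr rfl fun j _ => by ring
    · ring
  rw [hsum] at hbal
  linear_combination hbal

theorem block_model_temperatures_general (K : ℕ) [NeZero K]
    (nv sv : Fin K → ℕ) (hs : ∀ k, 0 < sv k ∧ sv k < nv k)
    (p q : ℝ)
    (n : ℕ) (hn : n = ∑ k, nv k)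
    (T : Fin K → ℝ)
    (hbal : ∀ k, ((nv k : ℝ) * (p - q) + (n : ℝ) * q) * T k =
      (sv 0 : ℝ) * (if k = 0 then p else q) + ((nv k : ℝ) - (sv k : ℝ)) * p * T k +
        ∑ j ∈ Finset.univ.erase k, ((nv j : ℝ) - (sv j : ℝ)) * q * T j)
    (Tbar : ℝ)
    (hTbar : Tbar = ((sv 0 : ℝ) + ∑ j, ((nv j : ℝ) - (sv j : ℝ)) * T j) / (n : ℝ)) :
    ((sv 0 : ℝ) * (p - q) + (n : ℝ) * q) * T 0 = (sv 0 : ℝ) * (p - q) + (n : ℝ) * Tbar * q ∧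
    ∀ k, k ≠ 0 → ((sv k : ℝ) * (p - q) + (n : ℝ) * q) * T k = (n : ℝ) * Tbar * q := by
  have hn0 : (n : ℝ) ≠ 0 := by
    have : nv 0 ≤ n := hn ▸ single_le_sum (fun k _ => Nat.zero_le (nv k)) (mem_univ 0)
    exact_mod_cast (((hs 0).1.trans (hs 0).2).trans_le this).ne'
  have htotal : (n : ℝ) * Tbar = sv 0 + ∑ j, ((nv j : ℝ) - sv j) * T j := by
    rw [hTbar, mul_div_cancel₀ _ hn0]
  have hblock k := balance_eq_add_total_heat (fun k => (nv k : ℝ)) (fun k => (sv k : ℝ)) T p q n _ k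
    (hbal k)
  refine ⟨?_, fun k hk => ?_⟩
  · have h0 := hblock 0
    rw [if_pos rfl] at h0
    linear_combination h0 - q * htotal
  · have hk' := hblock k
    rw [if_neg hk] at hk'
    linear_combination hk' - q * htotal

/-- Block model: equilibrium temperatures of free nodes satisfy
`(s₁(p-q)+nq) T₁ = s₁(p-q) + n T̄ q` and `(s_k(p-q)+nq) T_k = n T̄ q` for `k ≥ 2`. -/
theorem block_model_temperatures (K : ℕ) [NeZero K]
    (nv sv : Fin K → ℕ) (hs : ∀ k, 0 < sv k ∧ sv k < nv k)
    (p q : ℝ) (hp : 0 < p) (hq : 0 < q)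
    (n : ℕ) (hn : n = ∑ k, nv k)
    (T : Fin K → ℝ)
    (hbal : ∀ k, ((nv k : ℝ) * (p - q) + (n : ℝ) * q) * T k =
      (sv 0 : ℝ) * (if k = 0 then p else q) + ((nv k : ℝ) - (sv k : ℝ)) * p * T k +
        ∑ j ∈ Finset.univ.erase k, ((nv j : ℝ) - (sv j : ℝ)) * q * T j)
    (Tbar : ℝ)
    (hTbar : Tbar = ((sv 0 : ℝ) + ∑ j, ((nv j : ℝ) - (sv j : ℝ)) * T j) / (n : ℝ)) :
    ((sv 0 : ℝ) * (p - q) + (n : ℝ) * q) * T 0 = (sv 0 : ℝ) * (p - q) + (n : ℝ) * Tbar * q ∧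
    ∀ k, k ≠ 0 → ((sv k : ℝ) * (p - q) + (n : ℝ) * q) * T k = (n : ℝ) * Tbar * q :=
  block_model_temperatures_general K nv sv hs p q n hn T hbal Tbar hTbar
end

section
/- In the block-model Dirichlet problem (seeds of block 1 at temperature 1, other seeds at 0), the mean temperature satisfies T̄ = (s_1/n · (n_1(p-q)+nq)/(s_1(p-q)+nq)) / (1 - ∑_{k=1}^K (n_k - s_k)q/(s_k(p-q)+nq)). -/
/-!
Subtracting the self-block term, the balance equation of block `k` becomes
`d_k T_k = s₁ c_k + q S` with `d_k = s_k (p - q) + n q`, `c_k = p` for block 1 (index `0`) and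
`q` otherwise, and `S = ∑_j (n_j - s_j) T_j`: a diagonal system perturbed by a rank-one term.
Dividing by `d_k` and summing against the weights `n_k - s_k` gives `S (1 - B) = A` with
`B = ∑_k (n_k - s_k) q / d_k` and `A = ∑_k (n_k - s_k) s₁ c_k / d_k`, and `A` differs from `s₁ B`
only in the term of block 1.
The division by `1 - B` is legitimate because `d_k > q ∑_j (n_j - s_j)` forces `B < 1`.
-/

open Finset

theorem balance_eq_diagonal_add_rankOne {ι R : Type*} [Fintype ι] [DecidableEq ι] [CommRing R]
    {N s T : ι → R} {p q x b : R} {k : ι}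
    (h : (N k * (p - q) + x * q) * T k =
      b + (N k - s k) * p * T k + ∑ j ∈ univ.erase k, (N j - s j) * q * T j) :
    (s k * (p - q) + x * q) * T k = b + q * ∑ j, (N j - s j) * T j := by
  have hsum : ∑ j, (N j - s j) * q * T j = q * ∑ j, (N j - s j) * T j := by
    rw [mul_sum]
    exact sum_congr rfl fun j _ => by ring
  rw [sum_erase_eq_sub (mem_univ k), hsum] at h
  linear_combination h

theorem sum_mul_one_sub_eq_of_diagonal_add_rankOne {ι 𝕜 : Type*} [Fintype ι] [Field 𝕜]
    {d b m T : ι → 𝕜} {q : 𝕜} (hd : ∀ k, d k ≠ 0)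
    (h : ∀ k, d k * T k = b k + q * ∑ j, m j * T j) :
    (∑ j, m j * T j) * (1 - ∑ k, m k * q / d k) = ∑ k, m k * b k / d k := by
  set S := ∑ j, m j * T j
  have hT : ∀ k, T k = (b k + q * S) / d k := fun k => by
    rw [eq_div_iff (hd k), mul_comm, h k]
  have hS : S = ∑ k, m k * b k / d k + S * ∑ k, m k * q / d k := by
    calc S = ∑ k, (m k * b k / d k + S * (m k * q / d k)) :=
          sum_congr rfl fun k _ => by rw [hT k]; ring
      _ = _ := by rw [sum_add_distrib, mul_sum]
  linear_combination hS

theorem sum_mul_ite_div_eq {ι 𝕜 : Type*} [Fintype ι] [DecidableEq ι] [Field 𝕜]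
    (i : ι) (m d : ι → 𝕜) (a p q : 𝕜) :
    ∑ k, m k * (a * if k = i then p else q) / d k =
      a * ∑ k, m k * q / d k + m i * a * (p - q) / d i := by
  rw [mul_sum, ← sub_eq_iff_eq_add', ← sum_sub_distrib, sum_eq_single i]
  · simp only [if_true]; ring
  · intro k _ hk
    simp only [hk, if_false]; ring
  · simp

theorem sum_sub_mul_lt {ι R : Type*} [Fintype ι] [CommRing R] [LinearOrder R] [IsStrictOrderedRing R]
    {N s : ι → R} {p q : R}
    (hs : ∀ j, 0 < s j) (hp : 0 < p) (hq : 0 < q) (k : ι) :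
    ∑ j, (N j - s j) * q < s k * (p - q) + (∑ j, N j) * q := by
  have hsk : s k ≤ ∑ j, s j := single_le_sum (fun j _ => (hs j).le) (mem_univ k)
  rw [← sum_mul, sum_sub_distrib]
  nlinarith [hs k]

theorem sum_div_lt_one_of_sum_lt {ι 𝕜 : Type*} [Fintype ι] [Nonempty ι] [Field 𝕜] [LinearOrder 𝕜]
    [IsStrictOrderedRing 𝕜] {m d : ι → 𝕜}
    (hm : ∀ k, 0 < m k) (hd : ∀ k, ∑ j, m j < d k) : ∑ k, m k / d k < 1 := by
  have hM : 0 < ∑ j, m j := sum_pos (fun k _ => hm k) univ_nonempty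
  calc ∑ k, m k / d k < ∑ k, m k / ∑ j, m j :=
        sum_lt_sum_of_nonempty univ_nonempty fun k _ => div_lt_div_of_pos_left (hm k) hM (hd k)
    _ = 1 := by rw [← sum_div, div_self hM.ne']

/-- Block model: closed form for the mean temperature
`T̄ = (s₁/n · (n₁(p-q)+nq)/(s₁(p-q)+nq)) / (1 - ∑_k (n_k-s_k)q/(s_k(p-q)+nq))`. -/
theorem block_model_mean_temperature (K : ℕ) [NeZero K]
    (nv sv : Fin K → ℕ) (hs : ∀ k, 0 < sv k ∧ sv k < nv k)
    (p q : ℝ) (hp : 0 < p) (hq : 0 < q)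
    (n : ℕ) (hn : n = ∑ k, nv k)
    (T : Fin K → ℝ)
    (hbal : ∀ k, ((nv k : ℝ) * (p - q) + (n : ℝ) * q) * T k =
      (sv 0 : ℝ) * (if k = 0 then p else q) + ((nv k : ℝ) - (sv k : ℝ)) * p * T k +
        ∑ j ∈ Finset.univ.erase k, ((nv j : ℝ) - (sv j : ℝ)) * q * T j)
    (Tbar : ℝ)
    (hTbar : Tbar = ((sv 0 : ℝ) + ∑ j, ((nv j : ℝ) - (sv j : ℝ)) * T j) / (n : ℝ)) :
    Tbar = ((sv 0 : ℝ) / (n : ℝ) *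
        (((nv 0 : ℝ) * (p - q) + (n : ℝ) * q) / ((sv 0 : ℝ) * (p - q) + (n : ℝ) * q))) /
      (1 - ∑ k, ((nv k : ℝ) - (sv k : ℝ)) * q / ((sv k : ℝ) * (p - q) + (n : ℝ) * q)) := by
  have hn_real : (n : ℝ) = ∑ k, (nv k : ℝ) := by rw [hn]; push_cast; rfl
  have hm : ∀ k, 0 < ((nv k : ℝ) - sv k) * q :=
    fun k => mul_pos (sub_pos.2 (by exact_mod_cast (hs k).2)) hq
  have hdeg : ∀ k, ∑ j, ((nv j : ℝ) - sv j) * q < (sv k : ℝ) * (p - q) + n * q :=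
    fun k => hn_real ▸ sum_sub_mul_lt (fun j => by exact_mod_cast (hs j).1) hp hq k
  have hd : ∀ k, 0 < (sv k : ℝ) * (p - q) + n * q :=
    fun k => (sum_pos (fun j _ => hm j) univ_nonempty).trans (hdeg k)
  have hB := sub_pos.2 (sum_div_lt_one_of_sum_lt hm hdeg)
  have hred := fun k => balance_eq_diagonal_add_rankOne (N := fun j => (nv j : ℝ))
    (s := fun j => (sv j : ℝ)) (hbal k)
  have hfree := sum_mul_one_sub_eq_of_diagonal_add_rankOne (fun k => (hd k).ne') hred
  rw [sum_mul_ite_div_eq] at hfree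
  have hfirst : ((nv 0 : ℝ) - sv 0) * sv 0 * (p - q) / ((sv 0 : ℝ) * (p - q) + n * q) =
      sv 0 * (((nv 0 : ℝ) * (p - q) + n * q) / ((sv 0 : ℝ) * (p - q) + n * q)) - sv 0 := by
    rw [eq_sub_iff_add_eq, mul_div_assoc', div_add' _ _ _ (hd 0).ne']
    congr 1
    ring
  rw [hTbar, eq_div_iff hB.ne', div_mul_eq_mul_div, add_mul, hfree, hfirst]
  ring
end

section
/- In the block-model Dirichlet problem with p > q, the centered temperature of free nodes in block 1 is strictly positive and the centered temperatures of free nodes in every other block are strictly negative: T_1 - T̄ > 0 and T_k - T̄ < 0 for k = 2,...,K. -/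
/-- Block model with `p > q`: the centered temperature of free nodes of block 1
is strictly positive and that of every other block is strictly negative. -/
theorem block_model_centered_signs (K : ℕ) [NeZero K] (hK : 2 ≤ K)
    (nv sv : Fin K → ℕ) (hs : ∀ k, 0 < sv k ∧ sv k < nv k)
    (p q : ℝ) (hq : 0 < q) (hpq : q < p)
    (n : ℕ) (hn : n = ∑ k, nv k)
    (T : Fin K → ℝ) (Tbar : ℝ)
    (hTbar01 : 0 < Tbar ∧ Tbar < 1)
    (h1 : ((sv 0 : ℝ) * (p - q) + (n : ℝ) * q) * (T 0 - Tbar) =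
      (sv 0 : ℝ) * (p - q) * (1 - Tbar))
    (hk : ∀ k, k ≠ 0 → ((sv k : ℝ) * (p - q) + (n : ℝ) * q) * (T k - Tbar) =
      -((sv k : ℝ) * (p - q) * Tbar)) :
    0 < T 0 - Tbar ∧ ∀ k, k ≠ 0 → T k - Tbar < 0 := by
  have hpq' : (0:ℝ) < p - q := by linarith
  have hden : ∀ k : Fin K, (0:ℝ) < (sv k : ℝ) * (p - q) + (n : ℝ) * q := by
    intro k
    have hsk : (0:ℝ) < (sv k : ℝ) := by exact_mod_cast (hs k).1
    have hnk : 0 < n := by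
      rw [hn]
      exact Finset.sum_pos' (fun i _ => Nat.zero_le _)
        ⟨k, Finset.mem_univ k, lt_trans (hs k).1 (hs k).2⟩
    have hn' : (0:ℝ) < (n:ℝ) := by exact_mod_cast hnk
    positivity
  constructor
  · have hsk : (0:ℝ) < (sv 0 : ℝ) := by exact_mod_cast (hs 0).1
    have hrhs : (0:ℝ) < (sv 0 : ℝ) * (p - q) * (1 - Tbar) :=
      mul_pos (mul_pos hsk hpq') (by linarith [hTbar01.2])
    nlinarith [hden 0, mul_pos (hden 0) (show (0:ℝ) < 1 by norm_num)]
  · intro k hk0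
    have hsk : (0:ℝ) < (sv k : ℝ) := by exact_mod_cast (hs k).1
    have hrhs : (0:ℝ) < (sv k : ℝ) * (p - q) * Tbar := by
      exact mul_pos (mul_pos hsk hpq') hTbar01.1
    have h := hk k hk0
    nlinarith [hden k]
end

section
/- The Dirichlet classifier with temperature centering is consistent on the block model: if p > q, then for every choice of block sizes n_1,...,n_K and seed counts s_1,...,s_K (with 0 < s_k < n_k), every free node of block k is assigned label k, i.e. k is the unique maximizer over labels l of the centered temperature Δ_k^{(l)} = T_k^{(l)} - T̄^{(l)}. -/
/-!
All free nodes of a block share one temperature, so for each label `l` the Dirichlet problem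
collapses to the `K × K` system `D_k T_k = s_l w_{kl} + q ∑_j f_j T_j`, where `f_j = n_j - s_j`,
`D_k = s_k (p - q) + n q` and `w_{kl}` is `p` or `q`: a diagonal system plus a rank-one coupling.
Since `q ∑_j f_j / D_j < 1`, such a system has a unique solution, nonnegative for nonnegative data.
Uniqueness makes the temperatures of the `K` labels sum to `1`, hence every mean temperature lies
in `(0, 1]`, and eliminating the coupling through `n T̄^{(l)} = s_l + ∑_j f_j T_j^{(l)}` gives
`D_k (Δ_k^{(k)} - Δ_k^{(l)}) = s_k (p - q) (1 - T̄^{(k)} + T̄^{(l)}) > 0`.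
-/

open Finset

section DiagonalPlusRankOne

variable {ι : Type*} [Fintype ι] {D f c x y : ι → ℝ} {q : ℝ}

theorem sum_mul_mul_one_sub_eq_of_diag_add_rankOne (hD : ∀ j, D j ≠ 0)
    (hx : ∀ j, D j * x j = c j + q * ∑ i, f i * x i) :
    (∑ i, f i * x i) * (1 - q * ∑ i, f i / D i) = ∑ i, f i * c i / D i := by
  set S := ∑ i, f i * x i
  have hterm : ∀ j, f j * x j = f j * c j / D j + q * S * (f j / D j) := fun j => by
    rw [eq_div_of_mul_eq (hD j) ((mul_comm _ _).trans (hx j))]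
    ring
  have hS : S = ∑ i, f i * c i / D i + q * S * ∑ i, f i / D i := by
    calc S = ∑ j, (f j * c j / D j + q * S * (f j / D j)) := sum_congr rfl fun j _ => hterm j
      _ = _ := by rw [sum_add_distrib, ← mul_sum]
  linear_combination hS

theorem eq_of_diag_add_rankOne (hD : ∀ j, D j ≠ 0) (hA : q * ∑ i, f i / D i ≠ 1)
    (hx : ∀ j, D j * x j = c j + q * ∑ i, f i * x i)
    (hy : ∀ j, D j * y j = c j + q * ∑ i, f i * y i) : x = y := by
  have hS : ∑ i, f i * x i = ∑ i, f i * y i := by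
    have := (sum_mul_mul_one_sub_eq_of_diag_add_rankOne hD hx).trans
      (sum_mul_mul_one_sub_eq_of_diag_add_rankOne hD hy).symm
    exact mul_right_cancel₀ (sub_ne_zero.mpr hA.symm) this
  funext j
  exact mul_left_cancel₀ (hD j) (by rw [hx, hy, hS])

theorem nonneg_of_diag_add_rankOne (hD : ∀ j, 0 < D j) (hf : ∀ j, 0 ≤ f j) (hc : ∀ j, 0 ≤ c j)
    (hq : 0 ≤ q) (hA : q * ∑ i, f i / D i < 1)
    (hx : ∀ j, D j * x j = c j + q * ∑ i, f i * x i) (j : ι) : 0 ≤ x j := by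
  have hS : 0 ≤ ∑ i, f i * x i := by
    have h := sum_mul_mul_one_sub_eq_of_diag_add_rankOne (fun j => (hD j).ne') hx
    refine nonneg_of_mul_nonneg_left ?_ (sub_pos.mpr hA)
    rw [h]
    exact sum_nonneg fun i _ => div_nonneg (mul_nonneg (hf i) (hc i)) (hD i).le
  refine nonneg_of_mul_nonneg_right ?_ (hD j)
  rw [hx]
  exact add_nonneg (hc j) (mul_nonneg hq hS)

theorem mul_sum_div_lt_one {N : ℝ} (hq : 0 < q) (hf : ∀ j, 0 ≤ f j) (hD : ∀ j, N * q ≤ D j)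
    (hN : ∑ i, f i < N) : q * ∑ i, f i / D i < 1 := by
  have hNpos : 0 < N := (sum_nonneg fun i _ => hf i).trans_lt hN
  calc q * ∑ i, f i / D i ≤ ∑ i, f i / N := by
        rw [mul_sum]
        refine sum_le_sum fun i _ => ?_
        rw [mul_div_assoc', div_le_div_iff₀ (by nlinarith [hD i]) hNpos]
        nlinarith [mul_le_mul_of_nonneg_left (hD i) (hf i)]
    _ = (∑ i, f i) / N := (sum_div ..).symm
    _ < 1 := (div_lt_one hNpos).mpr hN

end DiagonalPlusRankOne

section BlockModel

variable {ι : Type*} [Fintype ι] {m s : ι → ℝ} {N p q : ℝ} {T : ι → ι → ℝ}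

theorem sum_free_lt_total [Nonempty ι] (hs : ∀ j, 0 < s j) (hN : N = ∑ j, m j) :
    ∑ j, (m j - s j) < N := by
  rw [sum_sub_distrib, hN, sub_lt_self_iff]
  exact sum_pos (fun j _ => hs j) univ_nonempty

theorem total_pos [Nonempty ι] (hs : ∀ j, 0 < s j) (hsm : ∀ j, s j ≤ m j)
    (hN : N = ∑ j, m j) : 0 < N :=
  (sum_nonneg fun j _ => sub_nonneg.mpr (hsm j)).trans_lt (sum_free_lt_total hs hN)

theorem blockDegree_pos [Nonempty ι] (hs : ∀ j, 0 < s j) (hsm : ∀ j, s j ≤ m j)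
    (hN : N = ∑ j, m j) (hq : 0 < q) (hpq : q < p) (k : ι) : 0 < s k * (p - q) + N * q := by
  have := total_pos hs hsm hN
  have := hs k
  have : 0 < p - q := sub_pos.mpr hpq
  positivity

theorem coupling_lt_one [Nonempty ι] (hs : ∀ j, 0 < s j) (hsm : ∀ j, s j ≤ m j)
    (hN : N = ∑ j, m j) (hq : 0 < q) (hpq : q < p) :
    q * ∑ j, (m j - s j) / (s j * (p - q) + N * q) < 1 :=
  mul_sum_div_lt_one hq (fun j => sub_nonneg.mpr (hsm j))
    (fun j => le_add_of_nonneg_left (mul_nonneg (hs j).le (sub_pos.mpr hpq).le))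
    (sum_free_lt_total hs hN)

variable [DecidableEq ι]

-- The own-block free term `(m k - s k) p T` is split as `(p - q) + q` to expose the coupling.
theorem reduced_balance
    (hbal : ∀ l k, (m k * (p - q) + N * q) * T l k =
      s l * (if k = l then p else q) + (m k - s k) * p * T l k +
        ∑ j ∈ univ.erase k, (m j - s j) * q * T l j) (l k : ι) :
    (s k * (p - q) + N * q) * T l k =
      s l * (if k = l then p else q) + q * ∑ j, (m j - s j) * T l j := by
  have h := hbal l k
  rw [sum_erase_eq_sub (mem_univ k)] at h
  have hsum : ∑ j, (m j - s j) * q * T l j = q * ∑ j, (m j - s j) * T l j := by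
    rw [mul_sum]
    exact sum_congr rfl fun j _ => by ring
  linear_combination h + hsum

theorem temperature_nonneg (hs : ∀ j, 0 < s j) (hsm : ∀ j, s j ≤ m j) (hN : N = ∑ j, m j)
    (hq : 0 < q) (hpq : q < p)
    (hred : ∀ l k, (s k * (p - q) + N * q) * T l k =
      s l * (if k = l then p else q) + q * ∑ j, (m j - s j) * T l j) (l k : ι) :
    0 ≤ T l k :=
  have : Nonempty ι := ⟨k⟩
  nonneg_of_diag_add_rankOne (blockDegree_pos hs hsm hN hq hpq) (fun j => sub_nonneg.mpr (hsm j))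
    (fun j => mul_nonneg (hs l).le (by split_ifs <;> linarith)) hq.le
    (coupling_lt_one hs hsm hN hq hpq) (hred l) k

theorem sum_seed_weight (k : ι) :
    ∑ l, s l * (if k = l then p else q) = s k * (p - q) + q * ∑ l, s l := by
  have h : ∀ l, s l * (if k = l then p else q) = q * s l + if k = l then (p - q) * s l else 0 :=
    fun l => by split_ifs <;> ring
  simp only [h, sum_add_distrib, ← mul_sum, sum_ite_eq, mem_univ, if_true]
  ring

theorem sum_temperature_eq_one (hs : ∀ j, 0 < s j) (hsm : ∀ j, s j ≤ m j) (hN : N = ∑ j, m j)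
    (hq : 0 < q) (hpq : q < p)
    (hred : ∀ l k, (s k * (p - q) + N * q) * T l k =
      s l * (if k = l then p else q) + q * ∑ j, (m j - s j) * T l j) (k : ι) :
    ∑ l, T l k = 1 := by
  have : Nonempty ι := ⟨k⟩
  -- Both `∑ l, T l` and `1` solve the system in which the seeds of every label are at `1`.
  have hsum : ∀ k, (s k * (p - q) + N * q) * ∑ l, T l k =
      ∑ l, s l * (if k = l then p else q) + q * ∑ j, (m j - s j) * ∑ l, T l j := fun k => by
    simp only [mul_sum, hred, sum_add_distrib]
    rw [sum_comm (γ := ι) (f := fun l j => q * ((m j - s j) * T l j))]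
  have hone : ∀ k, (s k * (p - q) + N * q) * 1 =
      ∑ l, s l * (if k = l then p else q) + q * ∑ j, (m j - s j) * 1 := fun k => by
    simp only [sum_seed_weight, mul_one, sum_sub_distrib, hN]
    ring
  exact congrFun (eq_of_diag_add_rankOne (fun j => (blockDegree_pos hs hsm hN hq hpq j).ne')
    (coupling_lt_one hs hsm hN hq hpq).ne hsum hone) k

noncomputable def meanTemperature (m s : ι → ℝ) (N : ℝ) (T : ι → ι → ℝ) (l : ι) : ℝ :=
  (s l + ∑ j, (m j - s j) * T l j) / N

theorem sum_meanTemperature_eq_one [Nonempty ι] (hs : ∀ j, 0 < s j) (hsm : ∀ j, s j ≤ m j)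
    (hN : N = ∑ j, m j) (hq : 0 < q) (hpq : q < p)
    (hred : ∀ l k, (s k * (p - q) + N * q) * T l k =
      s l * (if k = l then p else q) + q * ∑ j, (m j - s j) * T l j) :
    ∑ l, meanTemperature m s N T l = 1 := by
  have hT := sum_temperature_eq_one hs hsm hN hq hpq hred
  have hmass : ∑ l, (s l + ∑ j, (m j - s j) * T l j) = N := by
    rw [sum_add_distrib, sum_comm]
    simp only [← mul_sum, hT, mul_one, hN, ← sum_add_distrib, add_sub_cancel]
  simp only [meanTemperature]
  rw [← sum_div, hmass, div_self (total_pos hs hsm hN).ne']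

theorem meanTemperature_pos (hs : ∀ j, 0 < s j) (hsm : ∀ j, s j ≤ m j)
    (hN : N = ∑ j, m j) (hq : 0 < q) (hpq : q < p)
    (hred : ∀ l k, (s k * (p - q) + N * q) * T l k =
      s l * (if k = l then p else q) + q * ∑ j, (m j - s j) * T l j) (l : ι) :
    0 < meanTemperature m s N T l := by
  have : Nonempty ι := ⟨l⟩
  refine div_pos (add_pos_of_pos_of_nonneg (hs l) (sum_nonneg fun j _ => ?_)) (total_pos hs hsm hN)
  exact mul_nonneg (sub_nonneg.mpr (hsm j)) (temperature_nonneg hs hsm hN hq hpq hred l j)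

theorem blockDegree_mul_centered_temperature_sub (hN : N ≠ 0)
    (hred : ∀ l k, (s k * (p - q) + N * q) * T l k =
      s l * (if k = l then p else q) + q * ∑ j, (m j - s j) * T l j) {k l : ι} (hlk : l ≠ k) :
    (s k * (p - q) + N * q) * ((T k k - meanTemperature m s N T k) -
        (T l k - meanTemperature m s N T l)) =
      s k * (p - q) * (1 - meanTemperature m s N T k + meanTemperature m s N T l) := by
  have hkk := hred k k
  have hlk' := hred l k
  rw [if_pos rfl] at hkk
  rw [if_neg hlk.symm] at hlk'
  have hmean : ∀ l, N * meanTemperature m s N T l = s l + ∑ j, (m j - s j) * T l j :=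
    fun l => mul_div_cancel₀ _ hN
  linear_combination hkk - hlk' - q * hmean k + q * hmean l

theorem centered_temperature_lt (hs : ∀ j, 0 < s j) (hsm : ∀ j, s j ≤ m j)
    (hN : N = ∑ j, m j) (hq : 0 < q) (hpq : q < p)
    (hred : ∀ l k, (s k * (p - q) + N * q) * T l k =
      s l * (if k = l then p else q) + q * ∑ j, (m j - s j) * T l j) {k l : ι} (hlk : l ≠ k) :
    T l k - meanTemperature m s N T l < T k k - meanTemperature m s N T k := by
  have : Nonempty ι := ⟨k⟩
  have hk_le_one : meanTemperature m s N T k ≤ 1 :=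
    (sum_meanTemperature_eq_one hs hsm hN hq hpq hred).symm ▸ single_le_sum
      (fun l _ => (meanTemperature_pos hs hsm hN hq hpq hred l).le) (mem_univ k)
  have hgap : 0 < s k * (p - q) * (1 - meanTemperature m s N T k + meanTemperature m s N T l) :=
    mul_pos (mul_pos (hs k) (sub_pos.mpr hpq))
      (by linarith [meanTemperature_pos hs hsm hN hq hpq hred l])
  rw [← blockDegree_mul_centered_temperature_sub (total_pos hs hsm hN).ne' hred hlk] at hgap
  exact sub_pos.mp (pos_of_mul_pos_right hgap (blockDegree_pos hs hsm hN hq hpq k).le)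

end BlockModel

theorem dirichlet_classifier_consistent_general (K : ℕ)
    (nv sv : Fin K → ℕ) (hs : ∀ k, 0 < sv k ∧ sv k < nv k)
    (p q : ℝ) (hq : 0 < q) (hpq : q < p)
    (n : ℕ) (hn : n = ∑ k, nv k)
    (T : Fin K → Fin K → ℝ)
    (hbal : ∀ l k, ((nv k : ℝ) * (p - q) + (n : ℝ) * q) * T l k =
      (sv l : ℝ) * (if k = l then p else q) + ((nv k : ℝ) - (sv k : ℝ)) * p * T l k +
        ∑ j ∈ Finset.univ.erase k, ((nv j : ℝ) - (sv j : ℝ)) * q * T l j)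
    (Tbar : Fin K → ℝ)
    (hTbar : ∀ l, Tbar l = ((sv l : ℝ) + ∑ j, ((nv j : ℝ) - (sv j : ℝ)) * T l j) / (n : ℝ)) :
    ∀ k l, l ≠ k → T l k - Tbar l < T k k - Tbar k := by
  intro k l hlk
  have hN : (n : ℝ) = ∑ j, (nv j : ℝ) := by exact_mod_cast hn
  have hred := reduced_balance (m := fun j => (nv j : ℝ)) (s := fun j => (sv j : ℝ)) hbal
  obtain rfl : Tbar = meanTemperature (fun j => (nv j : ℝ)) (fun j => (sv j : ℝ)) n T :=
    funext hTbar
  exact centered_temperature_lt (fun j => by exact_mod_cast (hs j).1)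
    (fun j => by exact_mod_cast (hs j).2.le) hN hq hpq hred hlk

/-- Consistency of the centered Dirichlet classifier on the block model: if
`p > q`, for every free node of block `k` the label `k` is the unique maximizer
of the centered temperature `Δ_k^{(l)} = T_k^{(l)} - T̄^{(l)}`. -/
theorem dirichlet_classifier_consistent (K : ℕ) [NeZero K]
    (nv sv : Fin K → ℕ) (hs : ∀ k, 0 < sv k ∧ sv k < nv k)
    (p q : ℝ) (hq : 0 < q) (hpq : q < p)
    (n : ℕ) (hn : n = ∑ k, nv k)
    (T : Fin K → Fin K → ℝ)
    (hbal : ∀ l k, ((nv k : ℝ) * (p - q) + (n : ℝ) * q) * T l k =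
      (sv l : ℝ) * (if k = l then p else q) + ((nv k : ℝ) - (sv k : ℝ)) * p * T l k +
        ∑ j ∈ Finset.univ.erase k, ((nv j : ℝ) - (sv j : ℝ)) * q * T l j)
    (Tbar : Fin K → ℝ)
    (hTbar : ∀ l, Tbar l = ((sv l : ℝ) + ∑ j, ((nv j : ℝ) - (sv j : ℝ)) * T l j) / (n : ℝ)) :
    ∀ k l, l ≠ k → T l k - Tbar l < T k k - Tbar k :=
  dirichlet_classifier_consistent_general K nv sv hs p q hq hpq n hn T hbal Tbar hTbar
end

section
/- In the block-model Dirichlet problem with p > q, the temperature of free nodes of block 1 strictly exceeds that of free nodes of every other block: T_1 > T_k for all k = 2,...,K. -/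
/-- Block model with `p > q`: the temperature of free nodes of block 1 strictly
exceeds that of free nodes of every other block. -/
theorem block_model_block_one_hottest (K : ℕ) [NeZero K]
    (nv sv : Fin K → ℕ) (hs : ∀ k, 0 < sv k ∧ sv k < nv k)
    (p q : ℝ) (hq : 0 < q) (hpq : q < p)
    (n : ℕ) (hn : n = ∑ k, nv k)
    (T : Fin K → ℝ) (Tbar : ℝ)
    (hTbar01 : 0 < Tbar ∧ Tbar < 1)
    (h1 : ((sv 0 : ℝ) * (p - q) + (n : ℝ) * q) * T 0 = (sv 0 : ℝ) * (p - q) + (n : ℝ) * Tbar * q)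
    (hk : ∀ k, k ≠ 0 → ((sv k : ℝ) * (p - q) + (n : ℝ) * q) * T k = (n : ℝ) * Tbar * q) :
    ∀ k, k ≠ 0 → T k < T 0 := by
  intro k hk0
  obtain ⟨hTb0, hTb1⟩ := hTbar01
  have hnpos : 0 < n := by
    rw [hn]
    apply Finset.sum_pos
    · intro i _
      exact lt_trans (hs i).1 (hs i).2
    · exact Finset.univ_nonempty
  have hnR : (0 : ℝ) < n := by exact_mod_cast hnpos
  have hs0 : (0 : ℝ) < (sv 0 : ℝ) := by exact_mod_cast (hs 0).1
  have hsk : (0 : ℝ) < (sv k : ℝ) := by exact_mod_cast (hs k).1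
  have hpq' : (0 : ℝ) < p - q := by linarith
  have hA1 : (0 : ℝ) < (sv 0 : ℝ) * (p - q) + (n : ℝ) * q := by positivity
  have hAk : (0 : ℝ) < (sv k : ℝ) * (p - q) + (n : ℝ) * q := by positivity
  have hkk := hk k hk0
  -- T 0 > Tbar
  have h1' : T 0 > Tbar := by nlinarith [mul_pos hs0 (mul_pos hpq' (sub_pos.mpr hTb1))]
  have h2' : T k < Tbar := by nlinarith [mul_pos hsk (mul_pos hpq' hTb0)]
  linarith
end

section
/- The uncentered Dirichlet classifier is not consistent on the block model: there exist parameters with p > q (for instance K = 2, p = 1/10, q = 1/100, n_1 = n_2 = 100, s_1 = 10, s_2 = 5) such that the uncentered temperature of free nodes of block 2 under the label-2 diffusion does not exceed their temperature under the label-1 diffusion, so free nodes of block 2 are misclassified. -/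
/-- The uncentered Dirichlet classifier is not consistent on the block model:
with `K = 2`, `p = 1/10 > q = 1/100`, `n₁ = n₂ = 100`, `s₁ = 10`, `s₂ = 5`, the
temperature of free nodes of block 2 under the label-2 diffusion does not
exceed their temperature under the label-1 diffusion. -/
theorem uncentered_classifier_not_consistent
    (p q n1 n2 s1 s2 n : ℝ)
    (hp : p = 1/10) (hq : q = 1/100) (hn1 : n1 = 100) (hn2 : n2 = 100)
    (hs1 : s1 = 10) (hs2 : s2 = 5) (hn : n = n1 + n2)
    (Tbar1 Tbar2 T21 T22 : ℝ)
    (hTbar1 : Tbar1 = (s1 / n * ((n1 * (p - q) + n * q) / (s1 * (p - q) + n * q))) /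
      (1 - ((n1 - s1) * q / (s1 * (p - q) + n * q) + (n2 - s2) * q / (s2 * (p - q) + n * q))))
    (hTbar2 : Tbar2 = (s2 / n * ((n2 * (p - q) + n * q) / (s2 * (p - q) + n * q))) /
      (1 - ((n1 - s1) * q / (s1 * (p - q) + n * q) + (n2 - s2) * q / (s2 * (p - q) + n * q))))
    (hT21 : (s2 * (p - q) + n * q) * T21 = n * Tbar1 * q)
    (hT22 : (s2 * (p - q) + n * q) * T22 = s2 * (p - q) + n * Tbar2 * q) :
    q < p ∧ T22 ≤ T21 := by
  subst hp hq hn1 hn2 hs1 hs2 hn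
  have h1 : Tbar1 = 49/78 := by rw [hTbar1]; norm_num
  have h2 : Tbar2 = 29/78 := by rw [hTbar2]; norm_num
  subst h1 h2
  constructor
  · norm_num
  · nlinarith [hT21, hT22]
end

section
/- In the block model graph, any vector of temperatures that is constant on free nodes of each block and satisfies the per-block balance equations is a solution of the full n-node Dirichlet problem; by uniqueness, the equilibrium solution is constant on the free nodes of each block. -/
/-!
Group the sum `∑ l, A i l * T l` by blocks: for a vector that is constant on the seeds and on
the free nodes of each block, it becomes a sum over blocks weighted by the numbers of seeds and
of free nodes in each block, and the row sum of `A` is `nv k * (p - q) + n * q` for `i` in block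
`k`. The balance equation of block `k` is then the Dirichlet equation at any free node of block
`k`, multiplied by its degree. Constancy on blocks needs no uniqueness argument: two nodes of the
same block have the same row of `P`, so every vector takes equal values of `P *ᵥ T'` there.
-/

open Finset Matrix

variable {ι κ R : Type*}

theorem Finset.sum_comp_eq_sum_card_filter_mul [Fintype κ] [DecidableEq κ] [CommSemiring R]
    (s : Finset ι) (g : ι → κ) (f : κ → R) :
    ∑ l ∈ s, f (g l) = ∑ k, (#{l ∈ s | g l = k} : R) * f k := by
  rw [← sum_fiberwise s g]
  refine sum_congr rfl fun k _ => ?_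
  rw [sum_congr rfl fun l hl => congrArg f (mem_filter.1 hl).2, sum_const, nsmul_eq_mul]

theorem Finset.card_filter_add_card_filter_compl [Fintype ι] [DecidableEq ι] (s : Finset ι)
    (p : ι → Prop) [DecidablePred p] :
    #{l ∈ s | p l} + #{l ∈ sᶜ | p l} = #{l | p l} := by
  rw [← card_union_of_disjoint (disjoint_filter_filter disjoint_compl_right), ← filter_union,
    union_compl]

theorem Finset.sum_mul_ite_eq_add_sum_erase [Fintype κ] [DecidableEq κ] [CommSemiring R]
    (b : κ) (c : κ → R) (p q : R) :
    ∑ k, c k * (if b = k then p else q) = c b * p + ∑ k ∈ univ.erase b, c k * q := by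
  rw [← add_sum_erase _ _ (mem_univ b), if_pos rfl]
  congr 1
  exact sum_congr rfl fun k hk => by rw [if_neg (ne_of_mem_erase hk).symm]

theorem Matrix.mulVec_apply_eq_of_row_eq {m n : Type*} [Fintype n] [NonUnitalNonAssocSemiring R]
    {M : Matrix m n R} {i j : m} (h : M i = M j) (v : n → R) : (M *ᵥ v) i = (M *ᵥ v) j := by
  simp only [mulVec, h]

theorem Matrix.of_div_rowSum_mulVec_apply {m : Type*} [Fintype m] [Field R] (A : Matrix m m R)
    (v : m → R) (i : m) :
    ((of fun i j => A i j / ∑ l, A i l) *ᵥ v) i = (∑ l, A i l * v l) / ∑ l, A i l := by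
  simp only [mulVec, dotProduct, of_apply, sum_div, div_mul_eq_mul_div]

namespace BlockModel

variable [Fintype ι] (blk : ι → κ)

theorem sum_ite_eq_card_mul_sub_add [DecidableEq κ] [CommRing R] (b : κ) (p q : R) :
    ∑ l, (if b = blk l then p else q) = #{l | blk l = b} * (p - q) + Fintype.card ι * q := by
  have hsplit := congrArg (Nat.cast (R := R))
    (card_filter_add_card_filter_not (s := univ) (fun l => blk l = b))
  rw [card_univ, Nat.cast_add] at hsplit
  simp only [eq_comm (a := b), sum_ite, sum_const, nsmul_eq_mul, ← hsplit]
  ring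

variable [Fintype κ] [DecidableEq κ] [DecidableEq ι] (S : Finset ι)

theorem sum_mul_ite_mem_eq_sum_card_mul [CommSemiring R] (W : κ → κ → R) (σ τ : κ → R) (i : ι) :
    ∑ l, W (blk i) (blk l) * (if l ∈ S then σ (blk l) else τ (blk l)) =
      ∑ k, #{l ∈ S | blk l = k} * σ k * W (blk i) k +
        ∑ k, #{l ∈ Sᶜ | blk l = k} * τ k * W (blk i) k := by
  have hS : ∑ l ∈ S, W (blk i) (blk l) * (if l ∈ S then σ (blk l) else τ (blk l)) =
      ∑ l ∈ S, W (blk i) (blk l) * σ (blk l) :=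
    sum_congr rfl fun l hl => by rw [if_pos hl]
  have hSc : ∑ l ∈ Sᶜ, W (blk i) (blk l) * (if l ∈ S then σ (blk l) else τ (blk l)) =
      ∑ l ∈ Sᶜ, W (blk i) (blk l) * τ (blk l) :=
    sum_congr rfl fun l hl => by rw [if_neg (mem_compl.1 hl)]
  rw [← sum_add_sum_compl S, hS, hSc,
    sum_comp_eq_sum_card_filter_mul S blk (fun k => W (blk i) k * σ k),
    sum_comp_eq_sum_card_filter_mul Sᶜ blk (fun k => W (blk i) k * τ k)]
  simp only [mul_left_comm _ (W _ _), mul_comm _ (W _ _)]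

theorem sum_ite_mul_seedVector_eq [CommSemiring R] (p q : R) (k₀ : κ) (t : κ → R) (i : ι) :
    ∑ l, (if blk i = blk l then p else q) *
        (if l ∈ S then (if blk l = k₀ then 1 else 0) else t (blk l)) =
      #{l ∈ S | blk l = k₀} * (if blk i = k₀ then p else q) +
        #{l ∈ Sᶜ | blk l = blk i} * p * t (blk i) +
          ∑ j ∈ univ.erase (blk i), #{l ∈ Sᶜ | blk l = j} * q * t j := by
  rw [sum_mul_ite_mem_eq_sum_card_mul blk S (fun a b => if a = b then p else q)
    (fun k => if k = k₀ then 1 else 0) t, add_assoc]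
  congr 1
  · rw [sum_eq_single_of_mem k₀ (mem_univ k₀) fun k _ hk => by rw [if_neg hk, mul_zero, zero_mul],
      if_pos rfl, mul_one]
  · rw [sum_mul_ite_eq_add_sum_erase, mul_right_comm]
    exact congrArg _ (sum_congr rfl fun j _ => mul_right_comm _ _ _)

end BlockModel

open BlockModel

theorem block_model_solution_constant_on_blocks_general (n K : ℕ) [NeZero K]
    (blk : Fin n → Fin K)
    (p q : ℝ) (hp : 0 < p) (hq : 0 < q)
    (A : Matrix (Fin n) (Fin n) ℝ)
    (hA : ∀ i j, A i j = if blk i = blk j then p else q)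
    (P : Matrix (Fin n) (Fin n) ℝ) (hP : P = Matrix.of fun i j => A i j / ∑ l, A i l)
    (S : Finset (Fin n))
    (nv sv : Fin K → ℕ)
    (hnv : ∀ k, nv k = (Finset.univ.filter (fun i => blk i = k)).card)
    (hsv : ∀ k, sv k = (S.filter (fun i => blk i = k)).card)
    (t : Fin K → ℝ)
    (hbal : ∀ k, ((nv k : ℝ) * (p - q) + (n : ℝ) * q) * t k =
      (sv 0 : ℝ) * (if k = 0 then p else q) + ((nv k : ℝ) - (sv k : ℝ)) * p * t k +
        ∑ j ∈ Finset.univ.erase k, ((nv j : ℝ) - (sv j : ℝ)) * q * t j)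
    (T : Fin n → ℝ)
    (hT : ∀ i, T i = if i ∈ S then (if blk i = 0 then (1 : ℝ) else 0) else t (blk i)) :
    (∀ i ∉ S, T i = (P.mulVec T) i) ∧
    (∀ T' : Fin n → ℝ, (∀ i ∈ S, T' i = T i) → (∀ i ∉ S, T' i = (P.mulVec T') i) →
      ∀ i ∉ S, ∀ j ∉ S, blk i = blk j → T' i = T' j) := by
  have hfree : ∀ k, (#{l ∈ Sᶜ | blk l = k} : ℝ) = nv k - sv k := fun k => by
    rw [hnv, hsv, ← card_filter_add_card_filter_compl S]
    push_cast
    ring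
  have hrowSum : ∀ i, ∑ l, A i l = (nv (blk i) : ℝ) * (p - q) + n * q := fun i => by
    simp only [hA]
    rw [sum_ite_eq_card_mul_sub_add, hnv, Fintype.card_fin]
  have hrowSum_pos : ∀ i, 0 < ∑ l, A i l := fun i =>
    sum_pos (fun l _ => by rw [hA]; split_ifs <;> assumption) ⟨i, mem_univ i⟩
  have hnum : ∀ i, ∑ l, A i l * T l = (sv 0 : ℝ) * (if blk i = 0 then p else q) +
      ((nv (blk i) : ℝ) - sv (blk i)) * p * t (blk i) +
        ∑ j ∈ univ.erase (blk i), ((nv j : ℝ) - sv j) * q * t j := fun i => by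
    simp only [hA, hT]
    rw [sum_ite_mul_seedVector_eq]
    simp only [hfree, hsv]
  refine ⟨fun i hi => ?_, fun T' _ hT' i hi j hj hij => ?_⟩
  · rw [hP, of_div_rowSum_mulVec_apply, hnum, eq_div_iff (hrowSum_pos i).ne', hT, if_neg hi,
      hrowSum, mul_comm, hbal]
  · rw [hT' i hi, hT' j hj]
    refine mulVec_apply_eq_of_row_eq (funext fun l => ?_) T'
    simp only [hP, of_apply, hA, hij]

/-- Block model graph: a vector constant on the free nodes of each block whose
block values satisfy the per-block balance equations solves the full Dirichlet
problem; by uniqueness, the equilibrium solution is constant on the free nodes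
of each block. -/
theorem block_model_solution_constant_on_blocks (n K : ℕ) [NeZero K]
    (blk : Fin n → Fin K)
    (p q : ℝ) (hp : 0 < p) (hq : 0 < q)
    (A : Matrix (Fin n) (Fin n) ℝ)
    (hA : ∀ i j, A i j = if blk i = blk j then p else q)
    (P : Matrix (Fin n) (Fin n) ℝ) (hP : P = Matrix.of fun i j => A i j / ∑ l, A i l)
    (S : Finset (Fin n)) (hS : S.Nonempty) (hS' : S ≠ Finset.univ)
    (nv sv : Fin K → ℕ)
    (hnv : ∀ k, nv k = (Finset.univ.filter (fun i => blk i = k)).card)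
    (hsv : ∀ k, sv k = (S.filter (fun i => blk i = k)).card)
    (hs : ∀ k, 0 < sv k ∧ sv k < nv k)
    (t : Fin K → ℝ)
    (hbal : ∀ k, ((nv k : ℝ) * (p - q) + (n : ℝ) * q) * t k =
      (sv 0 : ℝ) * (if k = 0 then p else q) + ((nv k : ℝ) - (sv k : ℝ)) * p * t k +
        ∑ j ∈ Finset.univ.erase k, ((nv j : ℝ) - (sv j : ℝ)) * q * t j)
    (T : Fin n → ℝ)
    (hT : ∀ i, T i = if i ∈ S then (if blk i = 0 then (1 : ℝ) else 0) else t (blk i)) :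
    (∀ i ∉ S, T i = (P.mulVec T) i) ∧
    (∀ T' : Fin n → ℝ, (∀ i ∈ S, T' i = T i) → (∀ i ∉ S, T' i = (P.mulVec T') i) →
      ∀ i ∉ S, ∀ j ∉ S, blk i = blk j → T' i = T' j) :=
  block_model_solution_constant_on_blocks_general n K blk p q hp hq A hA P hP S nv sv hnv hsv t hbal
    T hT
end

section
/- Under label asymmetry in the two-block model with p = 1/10, q = 1/100, n_1 = 100, n_2 = 10, s_1 = s_2 = 5, the uncentered Dirichlet classifier misclassifies the free nodes of the smaller block: T_2^{(2)} ≤ T_2^{(1)}, whereas the centered classifier correctly assigns them label 2. -/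
/-- Label asymmetry in the two-block model with `p = 1/10`, `q = 1/100`,
`n₁ = 100`, `n₂ = 10`, `s₁ = s₂ = 5`: the uncentered classifier misclassifies
the free nodes of the smaller block (`T₂⁽²⁾ ≤ T₂⁽¹⁾`), while the centered
classifier correctly assigns them label 2. -/
theorem label_asymmetry_uncentered_fails_centered_works
    (p q n1 n2 s1 s2 n : ℝ)
    (hp : p = 1/10) (hq : q = 1/100) (hn1 : n1 = 100) (hn2 : n2 = 10)
    (hs1 : s1 = 5) (hs2 : s2 = 5) (hn : n = n1 + n2)
    (Tbar1 Tbar2 T21 T22 : ℝ)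
    (hTbar1 : Tbar1 = (s1 / n * ((n1 * (p - q) + n * q) / (s1 * (p - q) + n * q))) /
      (1 - ((n1 - s1) * q / (s1 * (p - q) + n * q) + (n2 - s2) * q / (s2 * (p - q) + n * q))))
    (hTbar2 : Tbar2 = (s2 / n * ((n2 * (p - q) + n * q) / (s2 * (p - q) + n * q))) /
      (1 - ((n1 - s1) * q / (s1 * (p - q) + n * q) + (n2 - s2) * q / (s2 * (p - q) + n * q))))
    (hT21 : (s2 * (p - q) + n * q) * T21 = n * Tbar1 * q)
    (hT22 : (s2 * (p - q) + n * q) * T22 = s2 * (p - q) + n * Tbar2 * q) :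
    T22 ≤ T21 ∧ T21 - Tbar1 < T22 - Tbar2 := by
  subst hp hq hn1 hn2 hs1 hs2 hn
  norm_num at hTbar1 hTbar2 hT21 hT22
  subst hTbar1 hTbar2
  constructor <;> nlinarith [hT21, hT22]
end
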